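/- The root lattice A3 ⊕ A2 ⊕ A2 does not admit an embedding into the E8 root lattice. -/
import Mathlib


/-- Types of irreducible ADE root lattices. -/
inductive ADE : Type
  | A : ℕ → ADE
  | D : ℕ → ADE
  | E : ℕ → ADE
  deriving DecidableEq

namespace ADE

/-- The rank of an irreducible ADE root lattice. -/
def rank : ADE → ℕ
  | A n => n
  | D n => n
  | E n => n

/-- The admissible types: `Aₙ` for `n ≥ 1`, `Dₙ` for `n ≥ 4`, `E₆`, `E₇`, `E₈`. -/
def Valid : ADE → Prop
  | A n => 1 ≤ n
  | D n => 4 ≤ n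
  | E n => n = 6 ∨ n = 7 ∨ n = 8

/-- The Gram matrix of an irreducible ADE root lattice (negative definite
convention: `-2` on the diagonal, `1` for adjacent nodes of the Dynkin diagram).
For `Dₙ` the diagram is a chain `0, …, n-2` with the node `n-1` attached to `n-3`;
for `Eₙ` it is a chain `0, …, n-2` with the node `n-1` attached to node `2`. -/
def gram : (t : ADE) → Matrix (Fin t.rank) (Fin t.rank) ℤ
  | A _ => Matrix.of fun i j =>
      if i = j then -2
      else if i.val + 1 = j.val ∨ j.val + 1 = i.val then 1 else 0
  | D n => Matrix.of fun i j =>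
      if i = j then -2
      else if ((i.val + 1 = j.val ∨ j.val + 1 = i.val) ∧ max i.val j.val + 1 < n)
          ∨ (min i.val j.val = n - 3 ∧ max i.val j.val = n - 1) then 1 else 0
  | E n => Matrix.of fun i j =>
      if i = j then -2
      else if ((i.val + 1 = j.val ∨ j.val + 1 = i.val) ∧ max i.val j.val + 1 < n)
          ∨ (min i.val j.val = 2 ∧ max i.val j.val = n - 1) then 1 else 0

end ADE

/-- The Gram matrix of the root lattice `E₈`. -/
def gramE8 : Matrix (Fin 8) (Fin 8) ℤ := ADE.gram (ADE.E 8)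

/-- The index set of the orthogonal direct sum of the root lattices in the list `L`. -/
abbrev RootIdx (L : List ADE) : Type := (i : Fin L.length) × Fin (L.get i).rank

/-- The Gram matrix of the orthogonal direct sum of the root lattices in `L`. -/
def gramList (L : List ADE) : Matrix (RootIdx L) (RootIdx L) ℤ :=
  Matrix.of fun x y =>
    if h : x.1 = y.1 then
      ADE.gram (L.get x.1) x.2 (Fin.cast (congrArg (fun k => (L.get k).rank) h.symm) y.2)
    else 0

/-- `B` is an embedding of the root lattice `⊕ L` into `E₈`: an injective
`ℤ`-linear map preserving the bilinear forms (its matrix of column vectors). -/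
def IsEmbedding (L : List ADE) (B : Matrix (Fin 8) (RootIdx L) ℤ) : Prop :=
  Function.Injective B.mulVecLin ∧ B.transpose * gramE8 * B = gramList L

/-- The quotient group `E₈ / Σ` of `E₈` by the image of the embedding `B`. -/
abbrev QuotE8 {L : List ADE} (B : Matrix (Fin 8) (RootIdx L) ℤ) :=
  (Fin 8 → ℤ) ⧸ LinearMap.range B.mulVecLin

namespace E8Proof
open Matrix

abbrev LL : List ADE := [ADE.A 3, ADE.A 2, ADE.A 2]
abbrev RI : Type := RootIdx LL

def i1 : RI := ⟨(0 : Fin 3), (0 : Fin 3)⟩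
def i2 : RI := ⟨(0 : Fin 3), (1 : Fin 3)⟩
def i3 : RI := ⟨(0 : Fin 3), (2 : Fin 3)⟩
def i4 : RI := ⟨(1 : Fin 3), (0 : Fin 2)⟩
def i5 : RI := ⟨(1 : Fin 3), (1 : Fin 2)⟩
def i6 : RI := ⟨(2 : Fin 3), (0 : Fin 2)⟩
def i7 : RI := ⟨(2 : Fin 3), (1 : Fin 2)⟩

theorem sumRI (f : RI → ℤ) : ∑ x : RI, f x = f i1 + f i2 + f i3 + f i4 + f i5 + f i6 + f i7 := by
  rw [← Finset.univ_sigma_univ, Finset.sum_sigma]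
  show (∑ a : Fin 3, ∑ s : Fin ((LL.get a).rank), f ⟨a, s⟩) = _
  rw [Fin.sum_univ_three]
  rw [show (∑ s : Fin ((LL.get (0:Fin 3)).rank), f ⟨(0:Fin 3), s⟩) = f i1 + f i2 + f i3 from
    Fin.sum_univ_three (fun s : Fin 3 => f ⟨(0:Fin 3), s⟩)]
  rw [show (∑ s : Fin ((LL.get (1:Fin 3)).rank), f ⟨(1:Fin 3), s⟩) = f i4 + f i5 from
    Fin.sum_univ_two (fun s : Fin 2 => f ⟨(1:Fin 3), s⟩)]
  rw [show (∑ s : Fin ((LL.get (2:Fin 3)).rank), f ⟨(2:Fin 3), s⟩) = f i6 + f i7 from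
    Fin.sum_univ_two (fun s : Fin 2 => f ⟨(2:Fin 3), s⟩)]
  ring

/-- the bilinear pairing on `E₈`. -/
def ip (x y : Fin 8 → ℤ) : ℤ := x ⬝ᵥ (gramE8 *ᵥ y)

theorem gramE8_symm : gramE8.transpose = gramE8 := by decide

theorem ip_symm (x y : Fin 8 → ℤ) : ip x y = ip y x := by
  rw [ip, Matrix.dotProduct_mulVec, ← gramE8_symm, Matrix.vecMul_transpose,
    dotProduct_comm, ip, Matrix.dotProduct_mulVec, ← gramE8_symm,
    Matrix.vecMul_transpose]

theorem ip_smul_left (k : ℤ) (x y : Fin 8 → ℤ) : ip (k • x) y = k * ip x y := by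
  simp [ip, dotProduct, Pi.smul_apply, smul_eq_mul, Finset.mul_sum, mul_assoc]

theorem ip_add_left (x x' y : Fin 8 → ℤ) : ip (x + x') y = ip x y + ip x' y := by
  simp [ip, add_dotProduct]

theorem ip_sub_left (x x' y : Fin 8 → ℤ) : ip (x - x') y = ip x y - ip x' y := by
  simp [ip, sub_dotProduct]

/-- the vector of pairings with the columns of `B`. -/
def aM (B : Matrix (Fin 8) RI ℤ) (z : Fin 8 → ℤ) : RI → ℤ :=
  B.transpose *ᵥ (gramE8 *ᵥ z)

theorem ip_mulVec_left (B : Matrix (Fin 8) RI ℤ) (c : RI → ℤ) (z : Fin 8 → ℤ) :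
    ip (B *ᵥ c) z = c ⬝ᵥ aM B z := by
  rw [ip, aM, dotProduct_comm, Matrix.dotProduct_mulVec, ← Matrix.mulVec_transpose,
    dotProduct_comm]


theorem aM_mulVec (B : Matrix (Fin 8) RI ℤ) (hB : B.transpose * gramE8 * B = gramList LL)
    (c : RI → ℤ) : aM B (B *ᵥ c) = gramList LL *ᵥ c := by
  rw [aM, Matrix.mulVec_mulVec, Matrix.mulVec_mulVec, hB]

theorem aM_sub (B : Matrix (Fin 8) RI ℤ) (x y : Fin 8 → ℤ) :
    aM B (x - y) = aM B x - aM B y := by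
  rw [aM, Matrix.mulVec_sub, Matrix.mulVec_sub, aM, aM]

theorem aM_smul (B : Matrix (Fin 8) RI ℤ) (k : ℤ) (x : Fin 8 → ℤ) :
    aM B (k • x) = k • aM B x := by
  rw [aM, Matrix.mulVec_smul, Matrix.mulVec_smul, aM]

theorem mulVecRI (M : Matrix RI RI ℤ) (c : RI → ℤ) (i : RI) :
    (M *ᵥ c) i = M i i1 * c i1 + M i i2 * c i2 + M i i3 * c i3 + M i i4 * c i4
      + M i i5 * c i5 + M i i6 * c i6 + M i i7 * c i7 :=
  sumRI (fun x => M i x * c x)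

example (c : RI → ℤ) : (gramList LL *ᵥ c) i1 = -2 * c i1 + c i2 := by
  rw [mulVecRI]
  norm_num [show gramList LL i1 i1 = -2 from by decide, show gramList LL i1 i2 = 1 from by decide,
    show gramList LL i1 i3 = 0 from by decide, show gramList LL i1 i4 = 0 from by decide,
    show gramList LL i1 i5 = 0 from by decide, show gramList LL i1 i6 = 0 from by decide,
    show gramList LL i1 i7 = 0 from by decide]


theorem rG1 (c : RI → ℤ) : (gramList LL *ᵥ c) i1 = -2 * c i1 + c i2 := by
  rw [mulVecRI]
  norm_num [show gramList LL i1 i1 = (-2) from by decide, show gramList LL i1 i2 = (1) from by decide, show gramList LL i1 i3 = (0) from by decide, show gramList LL i1 i4 = (0) from by decide, show gramList LL i1 i5 = (0) from by decide, show gramList LL i1 i6 = (0) from by decide, show gramList LL i1 i7 = (0) from by decide]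
  try ring

theorem rG2 (c : RI → ℤ) : (gramList LL *ᵥ c) i2 = c i1 - 2 * c i2 + c i3 := by
  rw [mulVecRI]
  norm_num [show gramList LL i2 i1 = (1) from by decide, show gramList LL i2 i2 = (-2) from by decide, show gramList LL i2 i3 = (1) from by decide, show gramList LL i2 i4 = (0) from by decide, show gramList LL i2 i5 = (0) from by decide, show gramList LL i2 i6 = (0) from by decide, show gramList LL i2 i7 = (0) from by decide]
  try ring

theorem rG3 (c : RI → ℤ) : (gramList LL *ᵥ c) i3 = c i2 - 2 * c i3 := by
  rw [mulVecRI]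
  norm_num [show gramList LL i3 i1 = (0) from by decide, show gramList LL i3 i2 = (1) from by decide, show gramList LL i3 i3 = (-2) from by decide, show gramList LL i3 i4 = (0) from by decide, show gramList LL i3 i5 = (0) from by decide, show gramList LL i3 i6 = (0) from by decide, show gramList LL i3 i7 = (0) from by decide]
  try ring

theorem rG4 (c : RI → ℤ) : (gramList LL *ᵥ c) i4 = -2 * c i4 + c i5 := by
  rw [mulVecRI]
  norm_num [show gramList LL i4 i1 = (0) from by decide, show gramList LL i4 i2 = (0) from by decide, show gramList LL i4 i3 = (0) from by decide, show gramList LL i4 i4 = (-2) from by decide, show gramList LL i4 i5 = (1) from by decide, show gramList LL i4 i6 = (0) from by decide, show gramList LL i4 i7 = (0) from by decide]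
  try ring

theorem rG5 (c : RI → ℤ) : (gramList LL *ᵥ c) i5 = c i4 - 2 * c i5 := by
  rw [mulVecRI]
  norm_num [show gramList LL i5 i1 = (0) from by decide, show gramList LL i5 i2 = (0) from by decide, show gramList LL i5 i3 = (0) from by decide, show gramList LL i5 i4 = (1) from by decide, show gramList LL i5 i5 = (-2) from by decide, show gramList LL i5 i6 = (0) from by decide, show gramList LL i5 i7 = (0) from by decide]
  try ring

theorem rG6 (c : RI → ℤ) : (gramList LL *ᵥ c) i6 = -2 * c i6 + c i7 := by
  rw [mulVecRI]
  norm_num [show gramList LL i6 i1 = (0) from by decide, show gramList LL i6 i2 = (0) from by decide, show gramList LL i6 i3 = (0) from by decide, show gramList LL i6 i4 = (0) from by decide, show gramList LL i6 i5 = (0) from by decide, show gramList LL i6 i6 = (-2) from by decide, show gramList LL i6 i7 = (1) from by decide]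
  try ring

theorem rG7 (c : RI → ℤ) : (gramList LL *ᵥ c) i7 = c i6 - 2 * c i7 := by
  rw [mulVecRI]
  norm_num [show gramList LL i7 i1 = (0) from by decide, show gramList LL i7 i2 = (0) from by decide, show gramList LL i7 i3 = (0) from by decide, show gramList LL i7 i4 = (0) from by decide, show gramList LL i7 i5 = (0) from by decide, show gramList LL i7 i6 = (1) from by decide, show gramList LL i7 i7 = (-2) from by decide]
  try ring

theorem sq3 (u v : ℤ) (h : 3 ∣ u*u + v*v) : 3 ∣ u ∧ 3 ∣ v := by
  have h' : ((u*u + v*v : ℤ) : ZMod 3) = 0 := by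
    rw [ZMod.intCast_zmod_eq_zero_iff_dvd]; exact_mod_cast h
  push_cast at h'
  have key : ∀ a b : ZMod 3, a*a + b*b = 0 → a = 0 ∧ b = 0 := by decide
  obtain ⟨h1, h2⟩ := key _ _ h'
  constructor
  · have := (ZMod.intCast_zmod_eq_zero_iff_dvd u 3).mp (by exact_mod_cast h1)
    exact_mod_cast this
  · have := (ZMod.intCast_zmod_eq_zero_iff_dvd v 3).mp (by exact_mod_cast h2)
    exact_mod_cast this

theorem step1 (B : Matrix (Fin 8) RI ℤ) (hB : B.transpose * gramE8 * B = gramList LL)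
    (c : RI → ℤ) (hdvd : ∀ r, 3 ∣ (B *ᵥ c) r) : ∀ i, 3 ∣ c i := by
  have hx : ∃ x : Fin 8 → ℤ, B *ᵥ c = (3:ℤ) • x := by
    refine ⟨fun r => (B *ᵥ c) r / 3, funext fun r => ?_⟩
    have := hdvd r
    show (B *ᵥ c) r = (3:ℤ) * ((B *ᵥ c) r / 3)
    omega
  obtain ⟨x, hx⟩ := hx
  have key : gramList LL *ᵥ c = (3:ℤ) • aM B x := by
    rw [← aM_smul, ← hx, aM_mulVec B hB]
  have E1 := congrFun key i1; rw [rG1] at E1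
  have E2 := congrFun key i2; rw [rG2] at E2
  have E3 := congrFun key i3; rw [rG3] at E3
  have E4 := congrFun key i4; rw [rG4] at E4
  have E5 := congrFun key i5; rw [rG5] at E5
  have E6 := congrFun key i6; rw [rG6] at E6
  have E7 := congrFun key i7; rw [rG7] at E7
  simp only [Pi.smul_apply, smul_eq_mul] at E1 E2 E3 E4 E5 E6 E7
  have HQ : c i1 * aM B x i1 + c i2 * aM B x i2 + c i3 * aM B x i3 + c i4 * aM B x i4
      + c i5 * aM B x i5 + c i6 * aM B x i6 + c i7 * aM B x i7 = 3 * ip x x := by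
    rw [show c i1 * aM B x i1 + c i2 * aM B x i2 + c i3 * aM B x i3 + c i4 * aM B x i4
      + c i5 * aM B x i5 + c i6 * aM B x i6 + c i7 * aM B x i7 = c ⬝ᵥ aM B x from
      (sumRI (fun i => c i * aM B x i)).symm]
    rw [← ip_mulVec_left, hx, ip_smul_left]
  set a1 := aM B x i1; set a2 := aM B x i2; set a3 := aM B x i3; set a4 := aM B x i4
  set a5 := aM B x i5; set a6 := aM B x i6; set a7 := aM B x i7
  set c1 := c i1; set c2 := c i2; set c3 := c i3; set c4 := c i4
  set c5 := c i5; set c6 := c i6; set c7 := c i7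
  have hc1 : 3 ∣ c1 := by omega
  have hc2 : 3 ∣ c2 := by omega
  have hc3 : 3 ∣ c3 := by omega
  obtain ⟨e, he⟩ : ∃ e, c5 = -c4 + 3 * e := ⟨(c4 + c5)/3, by omega⟩
  obtain ⟨f, hf⟩ : ∃ f, c7 = -c6 + 3 * f := ⟨(c6 + c7)/3, by omega⟩
  have ha4 : a4 = e - c4 := by omega
  have ha5 : a5 = c4 - 2*e := by omega
  have ha6 : a6 = f - c6 := by omega
  have ha7 : a7 = c6 - 2*f := by omega
  have q45 : c4 * a4 + c5 * a5 = -2*(c4*c4) + 6*(c4*e) - 6*(e*e) := by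
    rw [ha4, ha5, he]; ring
  have q67 : c6 * a6 + c7 * a7 = -2*(c6*c6) + 6*(c6*f) - 6*(f*f) := by
    rw [ha6, ha7, hf]; ring
  have hd1 : 3 ∣ c1 * a1 := hc1.mul_right a1
  have hd2 : 3 ∣ c2 * a2 := hc2.mul_right a2
  have hd3 : 3 ∣ c3 * a3 := hc3.mul_right a3
  have hS : 3 ∣ (c4*a4 + c5*a5 + c6*a6 + c7*a7) := by omega
  have hsq : 3 ∣ c4*c4 + c6*c6 := by omega
  obtain ⟨h4, h6⟩ := sq3 _ _ hsq
  have hall : ∀ i : RI, i = i1 ∨ i = i2 ∨ i = i3 ∨ i = i4 ∨ i = i5 ∨ i = i6 ∨ i = i7 := by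
    decide
  intro i
  rcases hall i with h|h|h|h|h|h|h <;> rw [h] <;> omega


def G8i : Matrix (Fin 8) (Fin 8) ℤ :=
  !![-4,-7,-10,-8,-6,-4,-2,-5;
     -7,-14,-20,-16,-12,-8,-4,-10;
     -10,-20,-30,-24,-18,-12,-6,-15;
     -8,-16,-24,-20,-15,-10,-5,-12;
     -6,-12,-18,-15,-12,-8,-4,-9;
     -4,-8,-12,-10,-8,-6,-3,-6;
     -2,-4,-6,-5,-4,-3,-2,-3;
     -5,-10,-15,-12,-9,-6,-3,-8]

theorem G8_mul_G8i : gramE8 * G8i = 1 := by decide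

instance : Fact (Nat.Prime 3) := ⟨by norm_num⟩

theorem step2 (B : Matrix (Fin 8) RI ℤ) (hB : B.transpose * gramE8 * B = gramList LL)
    (e : RI → ℤ) : ∃ x : Fin 8 → ℤ, ∀ i, 3 ∣ (aM B x i - e i) := by
  classical
  set f3 : ℤ →+* ZMod 3 := Int.castRingHom (ZMod 3) with hf3
  set Bb : Matrix (Fin 8) RI (ZMod 3) := B.map f3 with hBb
  have hinj : Function.Injective Bb.mulVecLin := by
    rw [← LinearMap.ker_eq_bot, LinearMap.ker_eq_bot']
    intro cb hcb
    set c : RI → ℤ := fun j => ((cb j).val : ℤ) with hc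
    have hcast : ∀ j, ((c j : ℤ) : ZMod 3) = cb j := by
      intro j
      simp only [hc]
      push_cast
      exact ZMod.natCast_rightInverse (cb j)
    have hcb' : Bb *ᵥ (fun j => ((c j : ℤ) : ZMod 3)) = 0 := by
      have : (fun j => ((c j : ℤ) : ZMod 3)) = cb := funext hcast
      rw [this]
      exact hcb
    have hdvd : ∀ r, 3 ∣ (B *ᵥ c) r := by
      intro r
      have h0 : ((B *ᵥ c) r : ZMod 3) = 0 := by
        have := RingHom.map_mulVec f3 B c r
        rw [show f3 ((B *ᵥ c) r) = (((B *ᵥ c) r : ℤ) : ZMod 3) from rfl] at this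
        rw [this, show (⇑f3 ∘ c) = (fun j => ((c j : ℤ) : ZMod 3)) from rfl, ← hBb]
        rw [congrFun hcb' r]
        rfl
      exact_mod_cast (ZMod.intCast_zmod_eq_zero_iff_dvd _ 3).mp h0
    have h3 := step1 B hB c hdvd
    funext j
    rw [← hcast j]
    have := (ZMod.intCast_zmod_eq_zero_iff_dvd (c j) 3).mpr (by exact_mod_cast h3 j)
    simpa using this
  have hrank : Bb.rank = 7 := by
    rw [Matrix.rank, LinearMap.finrank_range_of_inj hinj, Module.finrank_pi]
    decide
  have hrankT : Bb.transpose.rank = 7 := by rw [Matrix.rank_transpose]; exact hrank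
  have hsurj : Function.Surjective Bb.transpose.mulVecLin := by
    rw [← LinearMap.range_eq_top]
    apply Submodule.eq_top_of_finrank_eq
    rw [show Module.finrank (ZMod 3) (RI → ZMod 3) = 7 from by rw [Module.finrank_pi]; decide]
    exact hrankT
  obtain ⟨yb, hyb⟩ := hsurj (fun i => ((e i : ℤ) : ZMod 3))
  set y : Fin 8 → ℤ := fun r => ((yb r).val : ℤ) with hy
  have hycast : ∀ r, ((y r : ℤ) : ZMod 3) = yb r := by
    intro r
    simp only [hy]
    push_cast
    exact ZMod.natCast_rightInverse (yb r)
  refine ⟨G8i *ᵥ y, fun i => ?_⟩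
  have hax : aM B (G8i *ᵥ y) = B.transpose *ᵥ y := by
    rw [aM, show gramE8 *ᵥ (G8i *ᵥ y) = y from by
      rw [Matrix.mulVec_mulVec, G8_mul_G8i, Matrix.one_mulVec]]
  rw [hax]
  have h0 : (((B.transpose *ᵥ y) i : ℤ) : ZMod 3) = ((e i : ℤ) : ZMod 3) := by
    have := RingHom.map_mulVec f3 B.transpose y i
    rw [show f3 ((B.transpose *ᵥ y) i) = (((B.transpose *ᵥ y) i : ℤ) : ZMod 3) from rfl] at this
    rw [this, show (⇑f3 ∘ y) = (fun r => ((y r : ℤ) : ZMod 3)) from rfl]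
    rw [funext hycast]
    rw [show B.transpose.map ⇑f3 = Bb.transpose from (Matrix.transpose_map).symm]
    rw [show (Bb.transpose *ᵥ yb) = Bb.transpose.mulVecLin yb from rfl, hyb]
  have : (((B.transpose *ᵥ y) i - e i : ℤ) : ZMod 3) = 0 := by push_cast; rw [sub_eq_zero]; exact_mod_cast h0
  exact_mod_cast (ZMod.intCast_zmod_eq_zero_iff_dvd _ 3).mp this

theorem step29 (B : Matrix (Fin 8) RI ℤ) (hB : B.transpose * gramE8 * B = gramList LL)
    (e : RI → ℤ) : ∃ x : Fin 8 → ℤ, ∃ b : RI → ℤ, ∀ i, aM B x i = e i + 9 * b i := by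
  obtain ⟨x1, h1⟩ := step2 B hB e
  obtain ⟨x2, h2⟩ := step2 B hB (fun i => (aM B x1 i - e i) / 3)
  refine ⟨x1 - (3:ℤ) • x2, fun i => -((aM B x2 i - (aM B x1 i - e i)/3)/3), fun i => ?_⟩
  have hlin : aM B (x1 - (3:ℤ) • x2) i = aM B x1 i - 3 * aM B x2 i := by
    rw [aM_sub, aM_smul]
    simp
  rw [hlin]
  show _ = e i + 9 * -((aM B x2 i - (aM B x1 i - e i)/3)/3)
  have d1 := h1 i
  have d2 := h2 i
  omega


def e4 : RI → ℤ := fun i => if i = i4 then 1 else 0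
def e6 : RI → ℤ := fun i => if i = i6 then 1 else 0

/-- `36 G⁻¹` applied to a vector. -/
def hv (a : RI → ℤ) : RI → ℤ := fun i =>
  if i = i1 then -9*(3*a i1 + 2*a i2 + a i3)
  else if i = i2 then -9*(2*a i1 + 4*a i2 + 2*a i3)
  else if i = i3 then -9*(a i1 + 2*a i2 + 3*a i3)
  else if i = i4 then -12*(2*a i4 + a i5)
  else if i = i5 then -12*(a i4 + 2*a i5)
  else if i = i6 then -12*(2*a i6 + a i7)
  else -12*(a i6 + 2*a i7)

theorem aM_add (B : Matrix (Fin 8) RI ℤ) (x y : Fin 8 → ℤ) :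
    aM B (x + y) = aM B x + aM B y := by
  rw [aM, Matrix.mulVec_add, Matrix.mulVec_add, aM, aM]

theorem hv_vals (a : RI → ℤ) :
    hv a i1 = -9*(3*a i1 + 2*a i2 + a i3) ∧
    hv a i2 = -9*(2*a i1 + 4*a i2 + 2*a i3) ∧
    hv a i3 = -9*(a i1 + 2*a i2 + 3*a i3) ∧
    hv a i4 = -12*(2*a i4 + a i5) ∧
    hv a i5 = -12*(a i4 + 2*a i5) ∧
    hv a i6 = -12*(2*a i6 + a i7) ∧
    hv a i7 = -12*(a i6 + 2*a i7) := by
  refine ⟨?_, ?_, ?_, ?_, ?_, ?_, ?_⟩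
  · rw [hv]; rw [if_pos rfl]
  · rw [hv, if_neg (by decide), if_pos rfl]
  · rw [hv, if_neg (by decide), if_neg (by decide), if_pos rfl]
  · rw [hv, if_neg (by decide), if_neg (by decide), if_neg (by decide), if_pos rfl]
  · rw [hv, if_neg (by decide), if_neg (by decide), if_neg (by decide), if_neg (by decide),
      if_pos rfl]
  · rw [hv, if_neg (by decide), if_neg (by decide), if_neg (by decide), if_neg (by decide),
      if_neg (by decide), if_pos rfl]
  · rw [hv, if_neg (by decide), if_neg (by decide), if_neg (by decide), if_neg (by decide),
      if_neg (by decide), if_neg (by decide)]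

theorem G_hv (a : RI → ℤ) : gramList LL *ᵥ hv a = (36:ℤ) • a := by
  obtain ⟨v1, v2, v3, v4, v5, v6, v7⟩ := hv_vals a
  funext i
  have hall : ∀ i : RI, i = i1 ∨ i = i2 ∨ i = i3 ∨ i = i4 ∨ i = i5 ∨ i = i6 ∨ i = i7 := by
    decide
  have hsm : ∀ j : RI, ((36:ℤ) • a) j = 36 * a j := fun j => rfl
  rcases hall i with h|h|h|h|h|h|h <;> rw [h] <;> rw [hsm]
  · rw [rG1, v1, v2]; ring
  · rw [rG2, v1, v2, v3]; ring
  · rw [rG3, v2, v3]; ring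
  · rw [rG4, v4, v5]; ring
  · rw [rG5, v4, v5]; ring
  · rw [rG6, v6, v7]; ring
  · rw [rG7, v6, v7]; ring

theorem main_contra (B : Matrix (Fin 8) RI ℤ)
    (hB : B.transpose * gramE8 * B = gramList LL) : False := by
  classical
  obtain ⟨x2, b2, ha2⟩ := step29 B hB e4
  obtain ⟨x3, b3, ha3⟩ := step29 B hB e6
  set a2 : RI → ℤ := fun i => e4 i + 9 * b2 i with ha2def
  set a3 : RI → ℤ := fun i => e6 i + 9 * b3 i with ha3def
  have ha2' : aM B x2 = a2 := funext ha2
  have ha3' : aM B x3 = a3 := funext ha3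
  set y2 : Fin 8 → ℤ := (36:ℤ) • x2 - B *ᵥ (hv a2) with hy2def
  set y3 : Fin 8 → ℤ := (36:ℤ) • x3 - B *ᵥ (hv a3) with hy3def
  -- y2, y3 are orthogonal to all the columns
  have hAy2 : aM B y2 = 0 := by
    rw [hy2def, aM_sub, aM_smul, aM_mulVec B hB, G_hv, ha2', sub_self]
  have hAy3 : aM B y3 = 0 := by
    rw [hy3def, aM_sub, aM_smul, aM_mulVec B hB, G_hv, ha3', sub_self]
  -- pairing values
  have hA22 : ip (B *ᵥ hv a2) y2 = 0 := by
    rw [ip_mulVec_left, hAy2, dotProduct_zero]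
  have hA23 : ip (B *ᵥ hv a2) y3 = 0 := by
    rw [ip_mulVec_left, hAy3, dotProduct_zero]
  have hA33 : ip (B *ᵥ hv a3) y3 = 0 := by
    rw [ip_mulVec_left, hAy3, dotProduct_zero]
  have st2 : ip y2 x2 = 36 * ip x2 x2 - hv a2 ⬝ᵥ a2 := by
    have h' : ip y2 x2 = ip ((36:ℤ) • x2) x2 - ip (B *ᵥ hv a2) x2 := by
      rw [← ip_sub_left, ← hy2def]
    rw [h', ip_smul_left, ip_mulVec_left, ha2']
  have hn2 : ip y2 y2 = 36 * (36 * ip x2 x2 - hv a2 ⬝ᵥ a2) := by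
    have h1 : ip y2 y2 = ip ((36:ℤ) • x2) y2 - ip (B *ᵥ hv a2) y2 := by
      rw [← ip_sub_left, ← hy2def]
    rw [h1, hA22, ip_smul_left, ip_symm x2 y2, st2]
    ring
  have st3 : ip y3 x3 = 36 * ip x3 x3 - hv a3 ⬝ᵥ a3 := by
    have h' : ip y3 x3 = ip ((36:ℤ) • x3) x3 - ip (B *ᵥ hv a3) x3 := by
      rw [← ip_sub_left, ← hy3def]
    rw [h', ip_smul_left, ip_mulVec_left, ha3']
  have hn3 : ip y3 y3 = 36 * (36 * ip x3 x3 - hv a3 ⬝ᵥ a3) := by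
    have h1 : ip y3 y3 = ip ((36:ℤ) • x3) y3 - ip (B *ᵥ hv a3) y3 := by
      rw [← ip_sub_left, ← hy3def]
    rw [h1, hA33, ip_smul_left, ip_symm x3 y3, st3]
    ring
  have st23 : ip y3 x2 = 36 * ip x2 x3 - hv a3 ⬝ᵥ a2 := by
    have h' : ip y3 x2 = ip ((36:ℤ) • x3) x2 - ip (B *ᵥ hv a3) x2 := by
      rw [← ip_sub_left, ← hy3def]
    rw [h', ip_smul_left, ip_mulVec_left, ha2', ip_symm x3 x2]
  have hn23 : ip y2 y3 = 36 * (36 * ip x2 x3 - hv a3 ⬝ᵥ a2) := by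
    have h1 : ip y2 y3 = ip ((36:ℤ) • x2) y3 - ip (B *ᵥ hv a2) y3 := by
      rw [← ip_sub_left, ← hy2def]
    rw [h1, hA23, ip_smul_left, ip_symm x2 y3, st23]
    ring
  -- arithmetic of the dot products
  have hS2 : hv a2 ⬝ᵥ a2 = 3 + 9 * ((-3) + (-216)*((b2 i7)*(b2 i7)) + (-216)*((b2 i6)*(b2 i7)) + (-216)*((b2 i6)*(b2 i6)) + (-24)*(b2 i5) + (-216)*((b2 i5)*(b2 i5)) + (-48)*(b2 i4) + (-216)*((b2 i4)*(b2 i5)) + (-216)*((b2 i4)*(b2 i4)) + (-243)*((b2 i3)*(b2 i3)) + (-324)*((b2 i2)*(b2 i3)) + (-324)*((b2 i2)*(b2 i2)) + (-162)*((b2 i1)*(b2 i3)) + (-324)*((b2 i1)*(b2 i2)) + (-243)*((b2 i1)*(b2 i1))) := by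
    obtain ⟨v1, v2, v3, v4, v5, v6, v7⟩ := hv_vals a2
    rw [show hv a2 ⬝ᵥ a2 = ∑ i : RI, hv a2 i * a2 i from rfl, sumRI, v1, v2, v3, v4, v5, v6, v7]
    have e1 : a2 i1 = 9 * b2 i1 := by rw [ha2def]; norm_num [e4, show i1 ≠ i4 from by decide]
    have e2 : a2 i2 = 9 * b2 i2 := by rw [ha2def]; norm_num [e4, show i2 ≠ i4 from by decide]
    have e3 : a2 i3 = 9 * b2 i3 := by rw [ha2def]; norm_num [e4, show i3 ≠ i4 from by decide]
    have e4' : a2 i4 = 1 + 9 * b2 i4 := by rw [ha2def]; norm_num [e4]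
    have e5 : a2 i5 = 9 * b2 i5 := by rw [ha2def]; norm_num [e4, show i5 ≠ i4 from by decide]
    have e6' : a2 i6 = 9 * b2 i6 := by rw [ha2def]; norm_num [e4, show i6 ≠ i4 from by decide]
    have e7 : a2 i7 = 9 * b2 i7 := by rw [ha2def]; norm_num [e4, show i7 ≠ i4 from by decide]
    rw [e1, e2, e3, e4', e5, e6', e7]
    ring
  have hS3 : hv a3 ⬝ᵥ a3 = 3 + 9 * ((-3) + (-24)*(b3 i7) + (-216)*((b3 i7)*(b3 i7)) + (-48)*(b3 i6) + (-216)*((b3 i6)*(b3 i7)) + (-216)*((b3 i6)*(b3 i6)) + (-216)*((b3 i5)*(b3 i5)) + (-216)*((b3 i4)*(b3 i5)) + (-216)*((b3 i4)*(b3 i4)) + (-243)*((b3 i3)*(b3 i3)) + (-324)*((b3 i2)*(b3 i3)) + (-324)*((b3 i2)*(b3 i2)) + (-162)*((b3 i1)*(b3 i3)) + (-324)*((b3 i1)*(b3 i2)) + (-243)*((b3 i1)*(b3 i1))) := by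
    obtain ⟨v1, v2, v3, v4, v5, v6, v7⟩ := hv_vals a3
    rw [show hv a3 ⬝ᵥ a3 = ∑ i : RI, hv a3 i * a3 i from rfl, sumRI, v1, v2, v3, v4, v5, v6, v7]
    have e1 : a3 i1 = 9 * b3 i1 := by rw [ha3def]; norm_num [e6, show i1 ≠ i6 from by decide]
    have e2 : a3 i2 = 9 * b3 i2 := by rw [ha3def]; norm_num [e6, show i2 ≠ i6 from by decide]
    have e3 : a3 i3 = 9 * b3 i3 := by rw [ha3def]; norm_num [e6, show i3 ≠ i6 from by decide]
    have e4' : a3 i4 = 9 * b3 i4 := by rw [ha3def]; norm_num [e6, show i4 ≠ i6 from by decide]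
    have e5 : a3 i5 = 9 * b3 i5 := by rw [ha3def]; norm_num [e6, show i5 ≠ i6 from by decide]
    have e6' : a3 i6 = 1 + 9 * b3 i6 := by rw [ha3def]; norm_num [e6]
    have e7 : a3 i7 = 9 * b3 i7 := by rw [ha3def]; norm_num [e6, show i7 ≠ i6 from by decide]
    rw [e1, e2, e3, e4', e5, e6', e7]
    ring
  have hS23 : hv a3 ⬝ᵥ a2 = 9 * ((-12)*(b3 i5) + (-24)*(b3 i4) + (-12)*(b2 i7) + (-216)*((b2 i7)*(b3 i7)) + (-108)*((b2 i7)*(b3 i6)) + (-24)*(b2 i6) + (-108)*((b2 i6)*(b3 i7)) + (-216)*((b2 i6)*(b3 i6)) + (-216)*((b2 i5)*(b3 i5)) + (-108)*((b2 i5)*(b3 i4)) + (-108)*((b2 i4)*(b3 i5)) + (-216)*((b2 i4)*(b3 i4)) + (-243)*((b2 i3)*(b3 i3)) + (-162)*((b2 i3)*(b3 i2)) + (-81)*((b2 i3)*(b3 i1)) + (-162)*((b2 i2)*(b3 i3)) + (-324)*((b2 i2)*(b3 i2)) + (-162)*((b2 i2)*(b3 i1)) + (-81)*((b2 i1)*(b3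 i3)) + (-162)*((b2 i1)*(b3 i2)) + (-243)*((b2 i1)*(b3 i1))) := by
    obtain ⟨v1, v2, v3, v4, v5, v6, v7⟩ := hv_vals a3
    rw [show hv a3 ⬝ᵥ a2 = ∑ i : RI, hv a3 i * a2 i from rfl, sumRI, v1, v2, v3, v4, v5, v6, v7]
    have e1 : a2 i1 = 9 * b2 i1 := by rw [ha2def]; norm_num [e4, show i1 ≠ i4 from by decide]
    have e2 : a2 i2 = 9 * b2 i2 := by rw [ha2def]; norm_num [e4, show i2 ≠ i4 from by decide]
    have e3 : a2 i3 = 9 * b2 i3 := by rw [ha2def]; norm_num [e4, show i3 ≠ i4 from by decide]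
    have e4' : a2 i4 = 1 + 9 * b2 i4 := by rw [ha2def]; norm_num [e4]
    have e5 : a2 i5 = 9 * b2 i5 := by rw [ha2def]; norm_num [e4, show i5 ≠ i4 from by decide]
    have e6'' : a2 i6 = 9 * b2 i6 := by rw [ha2def]; norm_num [e4, show i6 ≠ i4 from by decide]
    have e7 : a2 i7 = 9 * b2 i7 := by rw [ha2def]; norm_num [e4, show i7 ≠ i4 from by decide]
    have f1 : a3 i1 = 9 * b3 i1 := by rw [ha3def]; norm_num [e6, show i1 ≠ i6 from by decide]
    have f2 : a3 i2 = 9 * b3 i2 := by rw [ha3def]; norm_num [e6, show i2 ≠ i6 from by decide]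
    have f3 : a3 i3 = 9 * b3 i3 := by rw [ha3def]; norm_num [e6, show i3 ≠ i6 from by decide]
    have f4 : a3 i4 = 9 * b3 i4 := by rw [ha3def]; norm_num [e6, show i4 ≠ i6 from by decide]
    have f5 : a3 i5 = 9 * b3 i5 := by rw [ha3def]; norm_num [e6, show i5 ≠ i6 from by decide]
    have f6 : a3 i6 = 1 + 9 * b3 i6 := by rw [ha3def]; norm_num [e6]
    have f7 : a3 i7 = 9 * b3 i7 := by rw [ha3def]; norm_num [e6, show i7 ≠ i6 from by decide]
    rw [e1, e2, e3, e4', e5, e6'', e7, f1, f2, f3, f4, f5, f6, f7]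
    ring
  have dvd2 : 81 ∣ ip y2 y2 - 54 :=
    ⟨16 * ip x2 x2 - 4 * ((-3) + (-216)*((b2 i7)*(b2 i7)) + (-216)*((b2 i6)*(b2 i7)) + (-216)*((b2 i6)*(b2 i6)) + (-24)*(b2 i5) + (-216)*((b2 i5)*(b2 i5)) + (-48)*(b2 i4) + (-216)*((b2 i4)*(b2 i5)) + (-216)*((b2 i4)*(b2 i4)) + (-243)*((b2 i3)*(b2 i3)) + (-324)*((b2 i2)*(b2 i3)) + (-324)*((b2 i2)*(b2 i2)) + (-162)*((b2 i1)*(b2 i3)) + (-324)*((b2 i1)*(b2 i2)) + (-243)*((b2 i1)*(b2 i1))) - 2, by rw [hn2, hS2]; ring⟩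
  have dvd3 : 81 ∣ ip y3 y3 - 54 :=
    ⟨16 * ip x3 x3 - 4 * ((-3) + (-24)*(b3 i7) + (-216)*((b3 i7)*(b3 i7)) + (-48)*(b3 i6) + (-216)*((b3 i6)*(b3 i7)) + (-216)*((b3 i6)*(b3 i6)) + (-216)*((b3 i5)*(b3 i5)) + (-216)*((b3 i4)*(b3 i5)) + (-216)*((b3 i4)*(b3 i4)) + (-243)*((b3 i3)*(b3 i3)) + (-324)*((b3 i2)*(b3 i3)) + (-324)*((b3 i2)*(b3 i2)) + (-162)*((b3 i1)*(b3 i3)) + (-324)*((b3 i1)*(b3 i2)) + (-243)*((b3 i1)*(b3 i1))) - 2, by rw [hn3, hS3]; ring⟩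
  have dvd23 : 81 ∣ ip y2 y3 :=
    ⟨16 * ip x2 x3 - 4 * ((-12)*(b3 i5) + (-24)*(b3 i4) + (-12)*(b2 i7) + (-216)*((b2 i7)*(b3 i7)) + (-108)*((b2 i7)*(b3 i6)) + (-24)*(b2 i6) + (-108)*((b2 i6)*(b3 i7)) + (-216)*((b2 i6)*(b3 i6)) + (-216)*((b2 i5)*(b3 i5)) + (-108)*((b2 i5)*(b3 i4)) + (-108)*((b2 i4)*(b3 i5)) + (-216)*((b2 i4)*(b3 i4)) + (-243)*((b2 i3)*(b3 i3)) + (-162)*((b2 i3)*(b3 i2)) + (-81)*((b2 i3)*(b3 i1)) + (-162)*((b2 i2)*(b3 i3)) + (-324)*((b2 i2)*(b3 i2)) + (-162)*((b2 i2)*(b3 i1)) + (-81)*((b2 i1)*(b3 i3)) + (-162)*((b2 i1)*(b3 i2)) + (-243)*((b2 i1)*(b3 i1))), by rw [hn23, hS23]; ring⟩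
  -- linear dependence of the 9 vectors
  set F : (RI ⊕ Fin 2) → (Fin 8 → ℤ) := Sum.elim (fun j => fun r => B r j) ![y2, y3] with hF
  have hnli : ¬ LinearIndependent ℤ F := by
    intro h
    have hcard := h.fintype_card_le_finrank
    rw [Module.finrank_pi] at hcard
    exact absurd hcard (by decide)
  obtain ⟨g, hgsum, iw, hiw⟩ := Fintype.not_linearIndependent_iff.mp hnli
  set cc : RI → ℤ := fun j => g (Sum.inl j) with hcc
  set s : ℤ := g (Sum.inr 0) with hs
  set t : ℤ := g (Sum.inr 1) with ht
  have hgsum' : B *ᵥ cc + (s • y2 + t • y3) = 0 := by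
    rw [Fintype.sum_sum_type] at hgsum
    rw [Fin.sum_univ_two] at hgsum
    have hBcc : (∑ a : RI, g (Sum.inl a) • F (Sum.inl a)) = B *ᵥ cc := by
      funext rr
      rw [Finset.sum_apply]
      rw [show (B *ᵥ cc) rr = ∑ j : RI, B rr j * cc j from rfl]
      apply Finset.sum_congr rfl
      intro j _
      simp [hF, hcc, mul_comm]
    rw [hBcc] at hgsum
    simpa [hF, hs, ht] using hgsum
  have hGcc : gramList LL *ᵥ cc = 0 := by
    have := congrArg (aM B) hgsum'
    rw [aM_add, aM_add (B := B) (x := s • y2), aM_smul, aM_smul, hAy2, hAy3,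
      aM_mulVec B hB] at this
    simpa [aM, Matrix.mulVec_zero] using this
  have hccz : ∀ j, cc j = 0 := by
    have E1 := congrFun hGcc i1; rw [rG1] at E1
    have E2 := congrFun hGcc i2; rw [rG2] at E2
    have E3 := congrFun hGcc i3; rw [rG3] at E3
    have E4 := congrFun hGcc i4; rw [rG4] at E4
    have E5 := congrFun hGcc i5; rw [rG5] at E5
    have E6 := congrFun hGcc i6; rw [rG6] at E6
    have E7 := congrFun hGcc i7; rw [rG7] at E7
    simp only [Pi.zero_apply] at E1 E2 E3 E4 E5 E6 E7
    have hall : ∀ i : RI, i = i1 ∨ i = i2 ∨ i = i3 ∨ i = i4 ∨ i = i5 ∨ i = i6 ∨ i = i7 := by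
      decide
    intro j
    rcases hall j with h|h|h|h|h|h|h <;> rw [h] <;> omega
  have hdep : s • y2 + t • y3 = 0 := by
    have : B *ᵥ cc = 0 := by
      rw [show cc = 0 from funext hccz, Matrix.mulVec_zero]
    rw [this, zero_add] at hgsum'
    exact hgsum'
  have hst : s ≠ 0 ∨ t ≠ 0 := by
    rcases iw with j | b
    · exact absurd (hccz j) hiw
    · fin_cases b
      · exact Or.inl hiw
      · exact Or.inr hiw
  have P2 : s * ip y2 y2 + t * ip y2 y3 = 0 := by
    have h0 : ip (s • y2 + t • y3) y2 = 0 := by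
      rw [hdep]; simp [ip, zero_dotProduct]
    rw [ip_add_left, ip_smul_left, ip_smul_left, ip_symm y3 y2] at h0
    exact h0
  have P3 : s * ip y2 y3 + t * ip y3 y3 = 0 := by
    have h0 : ip (s • y2 + t • y3) y3 = 0 := by
      rw [hdep]; simp [ip, zero_dotProduct]
    rw [ip_add_left, ip_smul_left, ip_smul_left] at h0
    exact h0
  have key : ip y2 y2 * ip y3 y3 = ip y2 y3 * ip y2 y3 := by
    rcases hst with hs0 | ht0
    · have hz : s * (ip y2 y2 * ip y3 y3 - ip y2 y3 * ip y2 y3) = 0 := by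
        linear_combination ip y3 y3 * P2 - ip y2 y3 * P3
      rcases mul_eq_zero.mp hz with h | h
      · exact absurd h hs0
      · linarith
    · have hz : t * (ip y2 y2 * ip y3 y3 - ip y2 y3 * ip y2 y3) = 0 := by
        linear_combination ip y2 y2 * P3 - ip y2 y3 * P2
      rcases mul_eq_zero.mp hz with h | h
      · exact absurd h ht0
      · linarith
  obtain ⟨A, hA⟩ := dvd2
  obtain ⟨C, hC⟩ := dvd3
  obtain ⟨D, hD⟩ := dvd23
  have hn2' : ip y2 y2 = 81 * A + 54 := by omega
  have hn3' : ip y3 y3 = 81 * C + 54 := by omega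
  rw [hn2', hn3', hD] at key
  obtain ⟨P, hP⟩ : ∃ P, A * C = P := ⟨_, rfl⟩
  obtain ⟨Q, hQ⟩ : ∃ Q, D * D = Q := ⟨_, rfl⟩
  have exp : 6561 * P + 4374 * A + 4374 * C + 2916 = 6561 * Q := by
    rw [← hP, ← hQ]; linear_combination key
  omega

end E8Proof

/-- The root lattice `A₃ ⊕ A₂ ⊕ A₂` does not embed into `E₈`. -/
theorem stmt_2 :
    ¬ ∃ B : Matrix (Fin 8) (RootIdx [ADE.A 3, ADE.A 2, ADE.A 2]) ℤ,
      IsEmbedding [ADE.A 3, ADE.A 2, ADE.A 2] B := by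
  rintro ⟨B, _, hB⟩
  exact E8Proof.main_contra B hB
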